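/- arXiv:2012.13022 — 5 statements merged into one kernel-verified Lean document; each statement's English description precedes it below -/
import Mathlib

section
/- Let V : ℝ≥0 → ℝ≥0 be a continuously differentiable function along a trajectory satisfying the differential inequality dV/dt ≤ -k(c₁ V^{γ₁} + c₂ V^{γ₂}) with k, c₁, c₂ > 0, 0 < γ₁ < 1, and γ₂ > 1. Then V(t) = 0 for all t ≥ T* := 1/(k c₁ (1-γ₁)) + 1/(k c₂ (γ₂-1)), i.e., V reaches zero in a fixed time independent of V(0). -/
/-!
Along a trajectory on which `V > 0`, the inequality `V' ≤ -a V ^ γ` (with `γ ≠ 1`) says exactly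
that `V ^ (1 - γ) / (1 - γ) + a t` is nonincreasing. For `γ > 1` this forces `V` below `1` within
time `1 / (a (γ - 1))`, whatever `V 0` is; for `γ < 1`, starting from `V ≤ 1`, it forces `V` to
reach `0` within time `1 / (a (1 - γ))`. Since `V` is nonincreasing, it stays at `0` afterwards.
-/

open Set

lemma Convex.antitoneOn_of_hasDerivAt_nonpos {D : Set ℝ} (hD : Convex ℝ D) {f f' : ℝ → ℝ}
    (hf : ∀ x ∈ D, HasDerivAt f (f' x) x) (hf' : ∀ x ∈ D, f' x ≤ 0) : AntitoneOn f D :=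
  antitoneOn_of_hasDerivWithinAt_nonpos hD (fun x hx ↦ (hf x hx).continuousAt.continuousWithinAt)
    (fun x hx ↦ (hf x (interior_subset hx)).hasDerivWithinAt) fun x hx ↦ hf' x (interior_subset hx)

section RpowDecay

variable {V V' : ℝ → ℝ} {a γ s : ℝ}

lemma antitoneOn_rpow_one_sub_div_add_mul {D : Set ℝ} (hD : Convex ℝ D) (hγ : γ ≠ 1)
    (hV : ∀ x ∈ D, HasDerivAt V (V' x) x) (hpos : ∀ x ∈ D, 0 < V x)
    (hineq : ∀ x ∈ D, V' x ≤ -a * V x ^ γ) :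
    AntitoneOn (fun x ↦ V x ^ (1 - γ) / (1 - γ) + a * x) D := by
  have hγ' : 1 - γ ≠ 0 := sub_ne_zero.mpr hγ.symm
  refine hD.antitoneOn_of_hasDerivAt_nonpos (f' := fun x ↦ V' x * V x ^ (-γ) + a)
    (fun x hx ↦ ?_) fun x hx ↦ ?_
  · refine (((hV x hx).rpow_const (Or.inl (hpos x hx).ne')).div_const (1 - γ)).add
      ((hasDerivAt_id x).const_mul a) |>.congr_deriv ?_
    rw [sub_sub_cancel_left, mul_one, mul_right_comm, mul_div_cancel_right₀ _ hγ']
  · have hVγ : V x ^ γ * V x ^ (-γ) = 1 := by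
      rw [← Real.rpow_add (hpos x hx), add_neg_cancel, Real.rpow_zero]
    have := Real.rpow_nonneg (hpos x hx).le (-γ)
    calc V' x * V x ^ (-γ) + a ≤ -a * V x ^ γ * V x ^ (-γ) + a := by gcongr; exact hineq x hx
      _ = 0 := by rw [mul_assoc, hVγ]; ring

lemma mul_sub_le_rpow_sub_rpow_div {t : ℝ} (hγ : γ ≠ 1) (hst : s ≤ t)
    (hV : ∀ x ∈ Icc s t, HasDerivAt V (V' x) x) (hpos : ∀ x ∈ Icc s t, 0 < V x)
    (hineq : ∀ x ∈ Icc s t, V' x ≤ -a * V x ^ γ) :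
    a * (t - s) ≤ (V s ^ (1 - γ) - V t ^ (1 - γ)) / (1 - γ) := by
  have := antitoneOn_rpow_one_sub_div_add_mul (convex_Icc s t) hγ hV hpos hineq
    (left_mem_Icc.mpr hst) (right_mem_Icc.mpr hst) hst
  dsimp only at this
  rw [sub_div]
  linarith

lemma exists_le_of_hasDerivAt_le_neg_rpow {c : ℝ} (ha : 0 < a) (hγ : 1 < γ) (hc : 0 < c)
    (hV : ∀ x ∈ Icc s (s + c ^ (1 - γ) / (a * (γ - 1))), HasDerivAt V (V' x) x)
    (hineq : ∀ x ∈ Icc s (s + c ^ (1 - γ) / (a * (γ - 1))), V' x ≤ -a * V x ^ γ) :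
    ∃ r ∈ Icc s (s + c ^ (1 - γ) / (a * (γ - 1))), V r ≤ c := by
  set T := c ^ (1 - γ) / (a * (γ - 1)) with hT
  have hγ1 : 0 < γ - 1 := by linarith
  have hT0 : 0 ≤ T := by positivity
  by_contra! hlarge
  have key := mul_sub_le_rpow_sub_rpow_div hγ.ne' (le_add_of_nonneg_right hT0) hV
    (fun x hx ↦ hc.trans (hlarge x hx)) hineq
  have hend : V (s + T) ^ (1 - γ) < c ^ (1 - γ) :=
    Real.rpow_lt_rpow_of_neg hc (hlarge _ (right_mem_Icc.mpr (le_add_of_nonneg_right hT0)))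
      (by linarith)
  have hstart : 0 < V s ^ (1 - γ) :=
    Real.rpow_pos_of_pos (hc.trans (hlarge _ (left_mem_Icc.mpr (le_add_of_nonneg_right hT0)))) _
  have haT : a * T = c ^ (1 - γ) / (γ - 1) := by rw [hT]; field_simp
  have hflip : ∀ x : ℝ, x / (1 - γ) = -x / (γ - 1) := fun x ↦ by
    rw [← neg_sub γ 1, div_neg, neg_div]
  rw [add_sub_cancel_left, haT, hflip] at key
  have := div_lt_div_of_pos_right (a := -(V s ^ (1 - γ) - V (s + T) ^ (1 - γ))) (b := c ^ (1 - γ))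
    (by linarith) hγ1
  linarith

lemma exists_eq_zero_of_hasDerivAt_le_neg_rpow {c : ℝ} (ha : 0 < a) (hγ : γ < 1) (hc : 0 ≤ c)
    (hVs : V s ≤ c) (hV : ∀ x ∈ Icc s (s + c ^ (1 - γ) / (a * (1 - γ))), HasDerivAt V (V' x) x)
    (hnonneg : ∀ x ∈ Icc s (s + c ^ (1 - γ) / (a * (1 - γ))), 0 ≤ V x)
    (hineq : ∀ x ∈ Icc s (s + c ^ (1 - γ) / (a * (1 - γ))), V' x ≤ -a * V x ^ γ) :
    ∃ r ∈ Icc s (s + c ^ (1 - γ) / (a * (1 - γ))), V r = 0 := by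
  set T := c ^ (1 - γ) / (a * (1 - γ)) with hT
  have hγ1 : 0 < 1 - γ := by linarith
  have hT0 : 0 ≤ T := by positivity
  by_contra! hne
  have hpos : ∀ x ∈ Icc s (s + T), 0 < V x := fun x hx ↦ (hnonneg x hx).lt_of_ne' (hne x hx)
  have key := mul_sub_le_rpow_sub_rpow_div hγ.ne (le_add_of_nonneg_right hT0) hV hpos hineq
  have hend : 0 < V (s + T) ^ (1 - γ) :=
    Real.rpow_pos_of_pos (hpos _ (right_mem_Icc.mpr (le_add_of_nonneg_right hT0))) _
  have hstart : V s ^ (1 - γ) ≤ c ^ (1 - γ) :=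
    Real.rpow_le_rpow (hpos _ (left_mem_Icc.mpr (le_add_of_nonneg_right hT0))).le hVs hγ1.le
  have haT : a * T = c ^ (1 - γ) / (1 - γ) := by rw [hT]; field_simp
  rw [add_sub_cancel_left, haT] at key
  have := div_lt_div_of_pos_right (c := 1 - γ) (a := V s ^ (1 - γ) - V (s + T) ^ (1 - γ))
    (by linarith) hγ1
  linarith

end RpowDecay

theorem fixed_time_lyapunov_general (V V' : ℝ → ℝ) (k c₁ c₂ γ₁ γ₂ : ℝ)
    (hk : 0 < k) (hc₁ : 0 < c₁) (hc₂ : 0 < c₂)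
    (hγ₁' : γ₁ < 1) (hγ₂ : 1 < γ₂)
    (hVnonneg : ∀ t, 0 ≤ t → 0 ≤ V t)
    (hderiv : ∀ t, 0 ≤ t → HasDerivAt V (V' t) t)
    (hineq : ∀ t, 0 ≤ t → V' t ≤ -k * (c₁ * (V t) ^ γ₁ + c₂ * (V t) ^ γ₂)) :
    ∀ t : ℝ, 1 / (k * c₁ * (1 - γ₁)) + 1 / (k * c₂ * (γ₂ - 1)) ≤ t → V t = 0 := by
  intro t ht
  have hdecay : ∀ x, 0 ≤ x →
      V' x ≤ -(k * c₁) * V x ^ γ₁ ∧ V' x ≤ -(k * c₂) * V x ^ γ₂ := fun x hx ↦ by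
    have h₁ := mul_nonneg (mul_nonneg hk.le hc₁.le) (Real.rpow_nonneg (hVnonneg x hx) γ₁)
    have h₂ := mul_nonneg (mul_nonneg hk.le hc₂.le) (Real.rpow_nonneg (hVnonneg x hx) γ₂)
    constructor <;> nlinarith [hineq x hx]
  have hanti : AntitoneOn V (Ici 0) := (convex_Ici 0).antitoneOn_of_hasDerivAt_nonpos hderiv
    fun x hx ↦ (hdecay x hx).1.trans <| by
      rw [neg_mul]
      exact neg_nonpos.mpr (mul_nonneg (by positivity) (Real.rpow_nonneg (hVnonneg x hx) γ₁))
  obtain ⟨s, hs, hVs⟩ := exists_le_of_hasDerivAt_le_neg_rpow (s := 0) (mul_pos hk hc₂) hγ₂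
    one_pos (fun x hx ↦ hderiv x hx.1) fun x hx ↦ (hdecay x hx.1).2
  obtain ⟨r, hr, hVr⟩ := exists_eq_zero_of_hasDerivAt_le_neg_rpow (mul_pos hk hc₁) hγ₁' zero_le_one
    hVs (fun x hx ↦ hderiv x (hs.1.trans hx.1)) (fun x hx ↦ hVnonneg x (hs.1.trans hx.1))
    fun x hx ↦ (hdecay x (hs.1.trans hx.1)).1
  rw [Real.one_rpow, zero_add] at hs
  rw [Real.one_rpow] at hr
  have hr₀ : 0 ≤ r := hs.1.trans hr.1
  have hrt : r ≤ t := by linarith [hr.2, hs.2]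
  exact le_antisymm ((hanti hr₀ (hr₀.trans hrt) hrt).trans_eq hVr) (hVnonneg t (hr₀.trans hrt))

theorem fixed_time_lyapunov (V V' : ℝ → ℝ) (k c₁ c₂ γ₁ γ₂ : ℝ)
    (hk : 0 < k) (hc₁ : 0 < c₁) (hc₂ : 0 < c₂)
    (hγ₁ : 0 < γ₁) (hγ₁' : γ₁ < 1) (hγ₂ : 1 < γ₂)
    (hVnonneg : ∀ t, 0 ≤ t → 0 ≤ V t)
    (hderiv : ∀ t, 0 ≤ t → HasDerivAt V (V' t) t)
    (hineq : ∀ t, 0 ≤ t → V' t ≤ -k * (c₁ * (V t) ^ γ₁ + c₂ * (V t) ^ γ₂)) :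
    ∀ t : ℝ, 1 / (k * c₁ * (1 - γ₁)) + 1 / (k * c₂ * (γ₂ - 1)) ≤ t → V t = 0 :=
  fixed_time_lyapunov_general V V' k c₁ c₂ γ₁ γ₂ hk hc₁ hc₂ hγ₁' hγ₂ hVnonneg hderiv hineq
end

section
/- Let P : ℝ^N → ℝ be C², radially unbounded, with a unique minimizer u* where ∇P(u*) = 0, and suppose P satisfies the gradient-dominance (PL) inequality P(u) - P(u*) ≤ (1/(2κ))|∇P(u)|² for all u and some κ > 0. Let V(z) := (1/2)(P(z) - P(u*))². Then along solutions of ż = -k ∇P(z)(|∇P(z)|^{-α₁} + |∇P(z)|^{-α₂}) (with 0 < α₁ < 1, α₂ < 0, k > 0), V satisfies dV/dt ≤ -k(c₁ V^{γ₁} + c₂ V^{γ₂}) for all z ≠ u*, where c₁ = 2^{(2+3(2-α₁))/4} κ^{(2-α₁)/2}, c₂ = 2^{(2+3(2-α₂))/4} κ^{(2-α₂)/2}, γ₁ = (2+(2-α₁))/4 ∈ (0,1), γ₂ = (2+(2-α₂))/4 > 1. -/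
/-! With `A = P z - P u*` and `V = A² / 2`, the chain rule gives
`dV/dt = -k A (‖∇P z‖^(2-α₁) + ‖∇P z‖^(2-α₂))` along the flow. Since `2 - α > 0`, the PL
inequality `2κA ≤ ‖∇P z‖²` yields `‖∇P z‖^(2-α) ≥ (2κA)^((2-α)/2)`, and
`A (2κA)^((2-α)/2)` is exactly `c V^γ` for the constants `c, γ` attached to `α`. -/

open Real

theorem rpow_neg_mul_sq {x : ℝ} (hx : 0 ≤ x) {α : ℝ} (hα : α ≠ 2) :
    x ^ (-α) * x ^ 2 = x ^ (2 - α) := by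
  rw [← rpow_two, ← rpow_add' hx (by contrapose! hα; linarith)]
  ring_nf

theorem hasDerivAt_half_sq_sub_comp {E : Type*} [NormedAddCommGroup E] [InnerProductSpace ℝ E]
    [CompleteSpace E] {P : E → ℝ} {z : ℝ → E} {v : E} {t c : ℝ}
    (hP : DifferentiableAt ℝ P (z t)) (hz : HasDerivAt z v t) :
    HasDerivAt (fun s => (1 / 2) * (P (z s) - c) ^ 2)
      ((P (z t) - c) * inner ℝ (gradient P (z t)) v) t := by
  have hPz : HasDerivAt (fun s => P (z s)) (inner ℝ (gradient P (z t)) v) t := by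
    refine (hP.hasGradientAt.hasFDerivAt.comp_hasDerivAt t hz).congr_deriv ?_
    exact InnerProductSpace.toDual_apply_apply
  exact (((hPz.sub_const c).pow 2).const_mul (1 / 2)).congr_deriv (by push_cast; ring)

theorem two_rpow_mul_rpow_mul_half_sq_rpow {κ A e : ℝ} (hκ : 0 ≤ κ) (hA : 0 ≤ A) (he : 0 < e) :
    (2 : ℝ) ^ ((2 + 3 * e) / 4) * κ ^ (e / 2) * ((1 / 2) * A ^ 2) ^ ((2 + e) / 4)
      = A * (2 * κ * A) ^ (e / 2) := by
  rcases hA.eq_or_lt with rfl | hA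
  · simp [zero_rpow (by positivity : (2 + e) / 4 ≠ 0)]
  · have hsq : (A ^ 2) ^ ((2 + e) / 4) = A * A ^ (e / 2) := by
      rw [← rpow_natCast, ← rpow_mul hA.le, ← rpow_one_add' hA.le (by positivity)]
      ring_nf
    have htwo : (2 : ℝ) ^ ((2 + 3 * e) / 4) * (1 / 2) ^ ((2 + e) / 4) = 2 ^ (e / 2) := by
      rw [one_div, inv_rpow zero_le_two, ← rpow_neg zero_le_two, ← rpow_add two_pos]
      ring_nf
    rw [mul_rpow (by norm_num) (by positivity), hsq, mul_rpow (by positivity) hA.le,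
      mul_rpow zero_le_two hκ, ← htwo]
    ring

theorem half_sq_rpow_le_of_pl {κ A G e : ℝ} (hκ : 0 ≤ κ) (hA : 0 ≤ A) (hG : 0 ≤ G) (he : 0 < e)
    (hPL : 2 * κ * A ≤ G ^ 2) :
    (2 : ℝ) ^ ((2 + 3 * e) / 4) * κ ^ (e / 2) * ((1 / 2) * A ^ 2) ^ ((2 + e) / 4)
      ≤ A * G ^ e := by
  rw [two_rpow_mul_rpow_mul_half_sq_rpow hκ hA he]
  gcongr
  calc (2 * κ * A) ^ (e / 2) ≤ (G ^ 2) ^ (e / 2) := by gcongr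
    _ = G ^ e := by rw [← rpow_natCast, ← rpow_mul hG]; ring_nf

theorem potential_game_lyapunov_inequality_general
    (N : ℕ) (P : EuclideanSpace ℝ (Fin N) → ℝ) (ustar : EuclideanSpace ℝ (Fin N))
    (κ k α₁ α₂ : ℝ) (hκ : 0 < κ) (hk : 0 < k)
    (hα₁ : 0 < α₁) (hα₁' : α₁ < 1) (hα₂ : α₂ < 0)
    (hP : ContDiff ℝ 2 P)
    (hmin : ∀ u, P ustar ≤ P u)
    (hPL : ∀ u, P u - P ustar ≤ 1 / (2 * κ) * ‖gradient P u‖ ^ 2)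
    (z : ℝ → EuclideanSpace ℝ (Fin N))
    (hz : ∀ t, HasDerivAt z
      (-(k * (‖gradient P (z t)‖ ^ (-α₁) + ‖gradient P (z t)‖ ^ (-α₂))) • gradient P (z t)) t) :
    (0 < (2 + (2 - α₁)) / 4 ∧ (2 + (2 - α₁)) / 4 < 1) ∧ 1 < (2 + (2 - α₂)) / 4 ∧
    ∀ t, z t ≠ ustar →
      ∃ d : ℝ, HasDerivAt (fun s => (1 / 2) * (P (z s) - P ustar) ^ 2) d t ∧
        d ≤ -k * ((2 : ℝ) ^ ((2 + 3 * (2 - α₁)) / 4) * κ ^ ((2 - α₁) / 2) *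
                    ((1 / 2) * (P (z t) - P ustar) ^ 2) ^ ((2 + (2 - α₁)) / 4)
                + (2 : ℝ) ^ ((2 + 3 * (2 - α₂)) / 4) * κ ^ ((2 - α₂) / 2) *
                    ((1 / 2) * (P (z t) - P ustar) ^ 2) ^ ((2 + (2 - α₂)) / 4)) := by
  refine ⟨⟨by linarith, by linarith⟩, by linarith, fun t _ => ?_⟩
  refine ⟨_, hasDerivAt_half_sq_sub_comp (hP.differentiable two_ne_zero _) (hz t), ?_⟩
  set A := P (z t) - P ustar
  set G := ‖gradient P (z t)‖
  have hA : 0 ≤ A := sub_nonneg.2 (hmin (z t))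
  have hG : 0 ≤ G := norm_nonneg _
  have hPLt : 2 * κ * A ≤ G ^ 2 := by
    have := hPL (z t)
    rw [one_div_mul_eq_div, le_div_iff₀ (by positivity)] at this
    linarith
  have h₁ := half_sq_rpow_le_of_pl hκ.le hA hG (by linarith : 0 < 2 - α₁) hPLt
  have h₂ := half_sq_rpow_le_of_pl hκ.le hA hG (by linarith : 0 < 2 - α₂) hPLt
  calc A * inner ℝ (gradient P (z t)) (-(k * (G ^ (-α₁) + G ^ (-α₂))) • gradient P (z t))
      = -k * (A * (G ^ (-α₁) * G ^ 2) + A * (G ^ (-α₂) * G ^ 2)) := by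
        rw [real_inner_smul_right, real_inner_self_eq_norm_sq]; ring
    _ = -k * (A * G ^ (2 - α₁) + A * G ^ (2 - α₂)) := by
        rw [rpow_neg_mul_sq hG (by linarith), rpow_neg_mul_sq hG (by linarith)]
    _ ≤ _ := by
        rw [neg_mul, neg_mul, neg_le_neg_iff]
        gcongr

theorem potential_game_lyapunov_inequality
    (N : ℕ) (P : EuclideanSpace ℝ (Fin N) → ℝ) (ustar : EuclideanSpace ℝ (Fin N))
    (κ k α₁ α₂ : ℝ) (hκ : 0 < κ) (hk : 0 < k)
    (hα₁ : 0 < α₁) (hα₁' : α₁ < 1) (hα₂ : α₂ < 0)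
    (hP : ContDiff ℝ 2 P)
    (hcoercive : Filter.Tendsto P (Filter.cocompact (EuclideanSpace ℝ (Fin N))) Filter.atTop)
    (hmin : ∀ u, P ustar ≤ P u)
    (huniq : ∀ u, (∀ v, P u ≤ P v) → u = ustar)
    (hgrad0 : gradient P ustar = 0)
    (hPL : ∀ u, P u - P ustar ≤ 1 / (2 * κ) * ‖gradient P u‖ ^ 2)
    (z : ℝ → EuclideanSpace ℝ (Fin N))
    (hz : ∀ t, HasDerivAt z
      (-(k * (‖gradient P (z t)‖ ^ (-α₁) + ‖gradient P (z t)‖ ^ (-α₂))) • gradient P (z t)) t) :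
    (0 < (2 + (2 - α₁)) / 4 ∧ (2 + (2 - α₁)) / 4 < 1) ∧ 1 < (2 + (2 - α₂)) / 4 ∧
    ∀ t, z t ≠ ustar →
      ∃ d : ℝ, HasDerivAt (fun s => (1 / 2) * (P (z s) - P ustar) ^ 2) d t ∧
        d ≤ -k * ((2 : ℝ) ^ ((2 + 3 * (2 - α₁)) / 4) * κ ^ ((2 - α₁) / 2) *
                    ((1 / 2) * (P (z t) - P ustar) ^ 2) ^ ((2 + (2 - α₁)) / 4)
                + (2 : ℝ) ^ ((2 + 3 * (2 - α₂)) / 4) * κ ^ ((2 - α₂) / 2) *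
                    ((1 / 2) * (P (z t) - P ustar) ^ 2) ^ ((2 + (2 - α₂)) / 4)) :=
  potential_game_lyapunov_inequality_general N P ustar κ k α₁ α₂ hκ hk hα₁ hα₁' hα₂ hP hmin hPL z hz
end

section
/- Let G : ℝ^N → ℝ^N be C¹ and κ-strongly monotone with unique zero u*. Let V(z) := (1/2)|G(z)|². Then along solutions of ż = -k G(z)(|G(z)|^{-α₁} + |G(z)|^{-α₂}) with k > 0, 0 < α₁ < 1, α₂ < 0, V satisfies dV/dt ≤ -kκ(c₁ V^{γ₁} + c₂ V^{γ₂}) for all z ≠ u*, where c₁ = 2^{(2-α₁)/2}, c₂ = 2^{(2-α₂)/2}, γ₁ = (2-α₁)/2 ∈ (1/2,1), γ₂ = (2-α₂)/2 > 1. -/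
/-!
Strong monotonicity makes `t ↦ ⟪η, G (x + t • η)⟫ - κ t ‖η‖²` monotone, so its derivative at `0`
is nonnegative: `⟪η, JG(x) η⟫ ≥ κ ‖η‖²`. Along the flow
`dV/dt = ⟪G, JG ż⟫ = -k (‖G‖^(-α₁) + ‖G‖^(-α₂)) ⟪G, JG G⟫ ≤ -kκ (‖G‖^(2-α₁) + ‖G‖^(2-α₂))`,
and `2^γ V^γ = ‖G‖^(2γ)`. Strong monotonicity also makes `G` injective, so `G (z t) ≠ 0` when
`z t ≠ u*`, which is where the negative powers of `‖G‖` are not junk values.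
-/

open scoped RealInnerProductSpace

section StronglyMonotone

variable {E : Type*} [NormedAddCommGroup E] [InnerProductSpace ℝ E] {G : E → E} {κ : ℝ}

theorem monotone_inner_apply_line_sub
    (hmono : ∀ u₁ u₂, κ * ‖u₁ - u₂‖ ^ 2 ≤ ⟪u₁ - u₂, G u₁ - G u₂⟫) (x η : E) :
    Monotone fun t : ℝ => ⟪η, G (x + t • η)⟫ - κ * t * ‖η‖ ^ 2 := by
  intro s t hst
  rcases hst.eq_or_lt with rfl | hlt
  · rfl
  have h := hmono (x + t • η) (x + s • η)
  rw [add_sub_add_left_eq_sub, ← sub_smul, norm_smul, real_inner_smul_left, mul_pow,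
    Real.norm_eq_abs, sq_abs, inner_sub_right] at h
  have hts : 0 < t - s := sub_pos.2 hlt
  nlinarith

theorem le_inner_fderiv_of_strongly_monotone
    (hmono : ∀ u₁ u₂, κ * ‖u₁ - u₂‖ ^ 2 ≤ ⟪u₁ - u₂, G u₁ - G u₂⟫) {x : E}
    (hG : DifferentiableAt ℝ G x) (η : E) :
    κ * ‖η‖ ^ 2 ≤ ⟪η, fderiv ℝ G x η⟫ := by
  have hline : HasDerivAt (fun t : ℝ => x + t • η) η 0 := by
    simpa using ((hasDerivAt_id (0 : ℝ)).smul_const η).const_add x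
  have hGline : HasDerivAt (fun t : ℝ => G (x + t • η)) (fderiv ℝ G x η) 0 := by
    have hGx : HasFDerivAt G (fderiv ℝ G x) (x + (0 : ℝ) • η) := by simpa using hG.hasFDerivAt
    exact hGx.comp_hasDerivAt 0 hline
  have hderiv : HasDerivAt (fun t : ℝ => ⟪η, G (x + t • η)⟫ - κ * t * ‖η‖ ^ 2)
      (⟪η, fderiv ℝ G x η⟫ - κ * ‖η‖ ^ 2) 0 := by
    simpa using ((hasDerivAt_const (0 : ℝ) η).inner ℝ hGline).fun_sub
      (((hasDerivAt_id (0 : ℝ)).const_mul κ).mul_const (‖η‖ ^ 2))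
  have hnonneg := (monotone_inner_apply_line_sub hmono x η).deriv_nonneg (x := 0)
  rw [hderiv.deriv] at hnonneg
  linarith

theorem injective_of_strongly_monotone (hκ : 0 < κ)
    (hmono : ∀ u₁ u₂, κ * ‖u₁ - u₂‖ ^ 2 ≤ ⟪u₁ - u₂, G u₁ - G u₂⟫) :
    Function.Injective G := by
  intro u₁ u₂ h
  have hle := hmono u₁ u₂
  rw [h, sub_self, inner_zero_right] at hle
  have : ‖u₁ - u₂‖ ^ 2 ≤ 0 := nonpos_of_mul_nonpos_right hle hκ
  simpa [sub_eq_zero] using this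

end StronglyMonotone

theorem HasDerivAt.half_norm_sq {F : Type*} [NormedAddCommGroup F] [InnerProductSpace ℝ F]
    {f : ℝ → F} {f' : F} {t : ℝ} (hf : HasDerivAt f f' t) :
    HasDerivAt (fun s => (1 / 2) * ‖f s‖ ^ 2) ⟪f t, f'⟫ t := by
  simpa using hf.norm_sq.const_mul (1 / 2 : ℝ)

theorem two_rpow_mul_half_sq_rpow {r : ℝ} (hr : 0 < r) (α : ℝ) :
    (2 : ℝ) ^ ((2 - α) / 2) * ((1 / 2) * r ^ 2) ^ ((2 - α) / 2) = r ^ (-α) * r ^ 2 := by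
  rw [← Real.mul_rpow zero_le_two (by positivity), ← mul_assoc, mul_one_div_cancel two_ne_zero,
    one_mul, ← Real.rpow_natCast, ← Real.rpow_mul hr.le, ← Real.rpow_add hr]
  congr 1
  push_cast
  ring

theorem monotone_game_lyapunov_inequality
    (N : ℕ) (G : EuclideanSpace ℝ (Fin N) → EuclideanSpace ℝ (Fin N))
    (ustar : EuclideanSpace ℝ (Fin N)) (κ k α₁ α₂ : ℝ)
    (hκ : 0 < κ) (hk : 0 < k) (hα₁ : 0 < α₁) (hα₁' : α₁ < 1) (hα₂ : α₂ < 0)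
    (hG : ContDiff ℝ 1 G)
    (hmono : ∀ u₁ u₂, κ * ‖u₁ - u₂‖ ^ 2 ≤ (inner ℝ (u₁ - u₂) (G u₁ - G u₂) : ℝ))
    (hzero : G ustar = 0)
    (z : ℝ → EuclideanSpace ℝ (Fin N))
    (hz : ∀ t, HasDerivAt z
      (-(k * (‖G (z t)‖ ^ (-α₁) + ‖G (z t)‖ ^ (-α₂))) • G (z t)) t) :
    (1 / 2 < (2 - α₁) / 2 ∧ (2 - α₁) / 2 < 1) ∧ 1 < (2 - α₂) / 2 ∧
    ∀ t, z t ≠ ustar →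
      ∃ d : ℝ, HasDerivAt (fun s => (1 / 2) * ‖G (z s)‖ ^ 2) d t ∧
        d ≤ -(k * κ) * ((2 : ℝ) ^ ((2 - α₁) / 2) * ((1 / 2) * ‖G (z t)‖ ^ 2) ^ ((2 - α₁) / 2)
                      + (2 : ℝ) ^ ((2 - α₂) / 2) * ((1 / 2) * ‖G (z t)‖ ^ 2) ^ ((2 - α₂) / 2)) := by
  refine ⟨⟨by linarith, by linarith⟩, by linarith, fun t hzt => ?_⟩
  have hGz : G (z t) ≠ 0 := fun h =>
    hzt (injective_of_strongly_monotone hκ hmono (h.trans hzero.symm))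
  have hGd : DifferentiableAt ℝ G (z t) := hG.differentiable one_ne_zero (z t)
  refine ⟨_, (hGd.hasFDerivAt.comp_hasDerivAt t (hz t)).half_norm_sq, ?_⟩
  have hr : 0 < ‖G (z t)‖ := norm_pos_iff.2 hGz
  have hc : 0 < k * (‖G (z t)‖ ^ (-α₁) + ‖G (z t)‖ ^ (-α₂)) := by positivity
  have hJ := le_inner_fderiv_of_strongly_monotone hmono hGd (G (z t))
  rw [two_rpow_mul_half_sq_rpow hr, two_rpow_mul_half_sq_rpow hr, Function.comp_apply, map_smul,
    real_inner_smul_right]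
  nlinarith [mul_le_mul_of_nonneg_left hJ hc.le]
end

section
/- Let J : ℝ^N → ℝ be C² and let μ̂(t) be dither signals with zero mean and covariance average (1/2)I_N over period T (distinct rational frequencies as above). Then for each i, (1/(ℓT)) ∫₀^{ℓT} μ̂ᵢ(s) J(û + A μ̂(s)) ds = (aᵢ/2) ∂J/∂uᵢ(û) + O(a²), where A = diag(a₁,…,a_N) and a = max aᵢ, with the error term uniform on compact sets of û. -/
/-!
Split `J (û + Aμ̂(s))` into `J û`, the linear term `DJ(û) (Aμ̂(s))` and the second-order Taylor
remainder. Against `μ̂ᵢ`, the constant averages to zero by the zero-mean condition, the linear term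
averages to `(aᵢ/2) ∂ᵢJ(û)` by the covariance identity, and the remainder is bounded by a multiple of
`‖Aμ̂(s)‖² ≤ N² a²`, uniformly for `û` in a compact set because `D²J` is bounded on a compact
neighbourhood of it.
-/

section Taylor

variable {E F : Type*} [NormedAddCommGroup E] [NormedSpace ℝ E]
  [NormedAddCommGroup F] [NormedSpace ℝ F]

theorem norm_sub_sub_fderiv_le_of_norm_fderiv_fderiv_le {J : E → F} (hJ : ContDiff ℝ 2 J)
    {u w : E} {M : ℝ} (hM : ∀ x ∈ segment ℝ u (u + w), ‖fderiv ℝ (fderiv ℝ J) x‖ ≤ M) :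
    ‖J (u + w) - J u - fderiv ℝ J u w‖ ≤ M * ‖w‖ ^ 2 := by
  have hJ' : ContDiff ℝ 1 (fderiv ℝ J) := hJ.fderiv_right (by norm_num)
  have hu : u ∈ segment ℝ u (u + w) := left_mem_segment ℝ u (u + w)
  have hdist : ∀ x ∈ segment ℝ u (u + w), ‖x - u‖ ≤ ‖w‖ := by
    intro x hx
    have hball : segment ℝ u (u + w) ⊆ Metric.closedBall u ‖w‖ :=
      (convex_closedBall u ‖w‖).segment_subset (Metric.mem_closedBall_self (norm_nonneg w))
        (by simp [dist_eq_norm])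
    simpa [dist_eq_norm] using hball hx
  have hM0 : 0 ≤ M := (norm_nonneg (fderiv ℝ (fderiv ℝ J) u)).trans (hM u hu)
  have hlip : ∀ x ∈ segment ℝ u (u + w), ‖fderiv ℝ J x - fderiv ℝ J u‖ ≤ M * ‖w‖ := fun x hx =>
    ((convex_segment u (u + w)).norm_image_sub_le_of_norm_fderiv_le
      (fun y _ => (hJ'.differentiable one_ne_zero) y) hM hu hx).trans
      (mul_le_mul_of_nonneg_left (hdist x hx) hM0)
  have hmvt := (convex_segment u (u + w)).norm_image_sub_le_of_norm_fderiv_le'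
    (fun y _ => (hJ.differentiable (by norm_num)) y) hlip hu (right_mem_segment ℝ u (u + w))
  rw [add_sub_cancel_left] at hmvt
  linarith

theorem ContDiff.exists_norm_sub_sub_fderiv_le_mul_sq [FiniteDimensional ℝ E] {J : E → F}
    (hJ : ContDiff ℝ 2 J) {K : Set E} (hK : IsCompact K) (r : ℝ) :
    ∃ C, 0 ≤ C ∧ ∀ u ∈ K, ∀ w, ‖w‖ ≤ r → ‖J (u + w) - J u - fderiv ℝ J u w‖ ≤ C * ‖w‖ ^ 2 := by
  have hD2 : Continuous (fderiv ℝ (fderiv ℝ J)) :=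
    (hJ.fderiv_right (m := 1) (by norm_num)).continuous_fderiv one_ne_zero
  obtain ⟨M, hM⟩ := (hK.cthickening (r := r)).exists_bound_of_continuousOn
    (f := fderiv ℝ (fderiv ℝ J)) hD2.continuousOn
  refine ⟨max M 0, le_max_right _ _, fun u hu w hw => ?_⟩
  refine norm_sub_sub_fderiv_le_of_norm_fderiv_fderiv_le hJ fun x hx => (hM x ?_).trans
    (le_max_left _ _)
  refine Metric.closedBall_subset_cthickening hu r ((convex_closedBall u r).segment_subset ?_ ?_ hx)
  · exact Metric.mem_closedBall_self ((norm_nonneg w).trans hw)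
  · simpa [dist_eq_norm] using hw

end Taylor

section Dither

variable {ι : Type*} [Fintype ι] [DecidableEq ι]

/-- The dithered offset `A μ̂(s)`, with `A = diag a`. -/
noncomputable def dither (a : ι → ℝ) (μ : ι → ℝ → ℝ) (s : ℝ) : EuclideanSpace ℝ ι :=
  ∑ j, (a j * μ j s) • EuclideanSpace.single j (1 : ℝ)

variable {a : ι → ℝ} {μ : ι → ℝ → ℝ}

theorem continuous_dither (hμ : ∀ j, Continuous (μ j)) : Continuous (dither a μ) :=
  continuous_finsetSum _ fun j _ => (continuous_const.mul (hμ j)).smul continuous_const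

theorem norm_dither_le {b : ℝ} {s : ℝ} (ha : ∀ j, |a j| ≤ b) (hμ : ∀ j, |μ j s| ≤ 1) :
    ‖dither a μ s‖ ≤ Fintype.card ι * b := by
  calc ‖dither a μ s‖ ≤ ∑ j, ‖(a j * μ j s) • EuclideanSpace.single j (1 : ℝ)‖ :=
        norm_sum_le _ _
    _ ≤ ∑ _j : ι, b := Finset.sum_le_sum fun j _ => by
        rw [norm_smul, PiLp.norm_single, norm_one, mul_one, Real.norm_eq_abs, abs_mul]
        nlinarith [abs_nonneg (a j), abs_nonneg (μ j s), ha j, hμ j]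
    _ = Fintype.card ι * b := by simp

theorem integral_mul_apply_dither {L : ℝ} (hμ : ∀ j, Continuous (μ j)) {i : ι}
    (hcov : ∀ j, ∫ s in (0 : ℝ)..L, μ i s * μ j s = if i = j then L / 2 else 0)
    (φ : EuclideanSpace ℝ ι →L[ℝ] ℝ) :
    ∫ s in (0 : ℝ)..L, μ i s * φ (dither a μ s)
      = L / 2 * (a i * φ (EuclideanSpace.single i 1)) := by
  have hexpand : ∀ s, μ i s * φ (dither a μ s)
      = ∑ j, μ i s * μ j s * (a j * φ (EuclideanSpace.single j 1)) := fun s => by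
    simp only [dither, map_sum, map_smul, smul_eq_mul, Finset.mul_sum]
    exact Finset.sum_congr rfl fun j _ => by ring
  simp_rw [hexpand]
  rw [intervalIntegral.integral_finsetSum
    (f := fun j s => μ i s * μ j s * (a j * φ (EuclideanSpace.single j 1))) fun j _ =>
    (((hμ i).mul (hμ j)).mul continuous_const).intervalIntegrable _ _]
  simp [intervalIntegral.integral_mul_const, hcov, ite_mul]

theorem abs_average_mul_comp_dither_sub_le {L B c : ℝ} (hL : 0 < L)
    (hμ : ∀ j, Continuous (μ j)) {i : ι} (hμi : ∀ s, |μ i s| ≤ 1)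
    (hmean : ∫ s in (0 : ℝ)..L, μ i s = 0)
    (hcov : ∀ j, ∫ s in (0 : ℝ)..L, μ i s * μ j s = if i = j then L / 2 else 0)
    {g : EuclideanSpace ℝ ι → ℝ} (hg : Continuous g) (φ : EuclideanSpace ℝ ι →L[ℝ] ℝ)
    (hB : ∀ s, |g (dither a μ s) - c - φ (dither a μ s)| ≤ B) :
    |1 / L * (∫ s in (0 : ℝ)..L, μ i s * g (dither a μ s))
      - a i / 2 * φ (EuclideanSpace.single i 1)| ≤ B := by
  have hv := continuous_dither (a := a) hμ
  set R : ℝ → ℝ := fun s => g (dither a μ s) - c - φ (dither a μ s)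
  have hsplit : ∫ s in (0 : ℝ)..L, μ i s * g (dither a μ s)
      = (∫ s in (0 : ℝ)..L, μ i s * c) + (∫ s in (0 : ℝ)..L, μ i s * φ (dither a μ s))
        + ∫ s in (0 : ℝ)..L, μ i s * R s := by
    rw [← intervalIntegral.integral_add, ← intervalIntegral.integral_add]
    · exact intervalIntegral.integral_congr fun s _ => by simp only [R]; ring
    all_goals exact Continuous.intervalIntegrable (by fun_prop) _ _
  have hR : |∫ s in (0 : ℝ)..L, μ i s * R s| ≤ B * L := by
    simpa [abs_of_pos hL] using intervalIntegral.norm_integral_le_of_norm_le_const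
      (a := 0) (b := L) (f := fun s => μ i s * R s) fun s _ => by
        rw [Real.norm_eq_abs, abs_mul]
        nlinarith [hμi s, hB s, abs_nonneg (μ i s), abs_nonneg (R s)]
  rw [hsplit, intervalIntegral.integral_mul_const, hmean, integral_mul_apply_dither hμ hcov]
  calc _ = |∫ s in (0 : ℝ)..L, μ i s * R s| / L := by
        rw [← abs_of_pos hL, ← abs_div, abs_of_pos hL]
        congr 1
        field_simp
        ring
    _ ≤ B := by rwa [div_le_iff₀ hL]

end Dither

theorem dithered_cost_averaging
    (N : ℕ) (J : EuclideanSpace ℝ (Fin N) → ℝ) (hJ : ContDiff ℝ 2 J)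
    (μ : Fin N → ℝ → ℝ) (T : ℝ) (hT : 0 < T)
    (hcont : ∀ i, Continuous (μ i))
    (hbd : ∀ i t, |μ i t| ≤ 1)
    (hmean : ∀ (i : Fin N) (ℓ : ℕ), 0 < ℓ →
      (∫ t in (0 : ℝ)..((ℓ : ℝ) * T), μ i t) = 0)
    (hcov : ∀ (i j : Fin N) (ℓ : ℕ), 0 < ℓ →
      (∫ t in (0 : ℝ)..((ℓ : ℝ) * T), μ i t * μ j t)
        = if i = j then (ℓ : ℝ) * T / 2 else 0) :
    ∀ K : Set (EuclideanSpace ℝ (Fin N)), IsCompact K →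
      ∃ C > (0 : ℝ), ∀ (a : Fin N → ℝ) (abar : ℝ), 0 < abar → abar ≤ 1 →
        (∀ i, 0 < a i ∧ a i ≤ abar) →
        ∀ uhat ∈ K, ∀ (i : Fin N) (ℓ : ℕ), 0 < ℓ →
          |(1 / ((ℓ : ℝ) * T)) *
              (∫ s in (0 : ℝ)..((ℓ : ℝ) * T),
                μ i s * J (uhat + ∑ j, (a j * μ j s) • EuclideanSpace.single j (1 : ℝ)))
            - (a i / 2) * fderiv ℝ J uhat (EuclideanSpace.single i (1 : ℝ))|
          ≤ C * abar ^ 2 := by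
  intro K hK
  obtain ⟨C, hC, hTaylor⟩ := hJ.exists_norm_sub_sub_fderiv_le_mul_sq hK (N : ℝ)
  refine ⟨C * N ^ 2 + 1, by positivity, fun a abar habar habar1 ha uhat hu i ℓ hℓ => ?_⟩
  have hL : 0 < (ℓ : ℝ) * T := by positivity
  have hdither : ∀ s, ‖dither a μ s‖ ≤ N * abar := fun s => by
    simpa using norm_dither_le (fun j => (abs_of_pos (ha j).1).trans_le (ha j).2) (hbd · s)
  have hremainder : ∀ s, |J (uhat + dither a μ s) - J uhat - fderiv ℝ J uhat (dither a μ s)|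
      ≤ C * (N * abar) ^ 2 := fun s =>
    calc _ ≤ C * ‖dither a μ s‖ ^ 2 :=
          hTaylor uhat hu _ ((hdither s).trans (mul_le_of_le_one_right (by positivity) habar1))
      _ ≤ C * (N * abar) ^ 2 := by gcongr; exact hdither s
  calc _ ≤ C * (N * abar) ^ 2 :=
        abs_average_mul_comp_dither_sub_le hL hcont (hbd i) (hmean i ℓ hℓ) (hcov i · ℓ hℓ)
          (hJ.continuous.comp (continuous_const_add uhat)) _ hremainder
    _ ≤ (C * N ^ 2 + 1) * abar ^ 2 := by nlinarith [sq_nonneg abar]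
end

section
/- Let L be the Laplacian of a connected undirected graph on N nodes, and consider the linear system ẋ = -(L ⊗ I_N + B)x + B(G(û) ⊗ 1_N) with B encoding b_{ij} = δ_{ij} and û fixed. Then the system has a unique globally exponentially stable equilibrium x* whose components satisfy x*_{ij} = G_j(û) for all i, j; in particular every block x*_i equals G(û), so |x*_i| = |G(û)|. -/
/-!
Write `M = L ⊗ I + B` and split a vector `v` indexed by pairs `(i, j)` into its columns
`vⱼ = (v (i, j))ᵢ`. Then `vᵀ M v = ∑ⱼ vⱼᵀ L vⱼ + ∑ⱼ v (j, j)²`, and this vanishes only if every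
column lies in `ker L`, i.e. is constant, and has a zero entry, its `j`-th: `M` is positive
definite. Compactness of the unit sphere turns this into coercivity `vᵀ M v ≥ λ |v|²`, so along
any trajectory the Lyapunov function `|x - x*|²` satisfies `V' ≤ -2λ V` and decays exponentially
by Grönwall. The column-constant vector `x* (i, j) = G j` is an equilibrium because `L 1 = 0`,
and it is the only one because `M` is injective.
-/

open Matrix Real
open scoped Kronecker

theorem exists_pos_mul_norm_sq_le {E : Type*} [NormedAddCommGroup E] [NormedSpace ℝ E]
    [FiniteDimensional ℝ E] {Q : E → ℝ} (hQ : Continuous Q)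
    (hsmul : ∀ (c : ℝ) (v : E), Q (c • v) = c ^ 2 * Q v) (hpos : ∀ v ≠ 0, 0 < Q v) :
    ∃ lam > 0, ∀ v, lam * ‖v‖ ^ 2 ≤ Q v := by
  have hQ0 : Q 0 = 0 := by simpa using hsmul 0 0
  rcases subsingleton_or_nontrivial E with hE | hE
  · exact ⟨1, one_pos, fun v => by simp [Subsingleton.elim v 0, hQ0]⟩
  obtain ⟨u, hu, hmin⟩ := (isCompact_sphere (0 : E) 1).exists_isMinOn
    (NormedSpace.sphere_nonempty.2 zero_le_one) hQ.continuousOn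
  refine ⟨Q u, hpos u (ne_zero_of_mem_unit_sphere ⟨u, hu⟩), fun v => ?_⟩
  rcases eq_or_ne v 0 with rfl | hv
  · simp [hQ0]
  have hv' : ‖v‖⁻¹ • v ∈ Metric.sphere (0 : E) 1 := by
    simp [norm_smul, hv]
  calc Q u * ‖v‖ ^ 2 ≤ Q (‖v‖⁻¹ • v) * ‖v‖ ^ 2 := by gcongr; exact hmin hv'
    _ = Q v := by rw [hsmul]; field_simp

theorem le_mul_exp_of_hasDerivAt_le {f f' : ℝ → ℝ} {K : ℝ} (hf : ∀ t, HasDerivAt f (f' t) t)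
    (hle : ∀ t, f' t ≤ K * f t) {t : ℝ} (ht : 0 ≤ t) : f t ≤ f 0 * exp (K * t) := by
  simpa [gronwallBound_ε0] using le_gronwallBound_of_liminf_deriv_right_le (a := 0) (b := t)
    (ε := 0) (fun x _ => (hf x).continuousAt.continuousWithinAt)
    (fun x _ r hr => (hf x).hasDerivWithinAt.liminf_right_slope_le hr) le_rfl
    (fun x _ => by simpa using hle x) t ⟨ht, le_rfl⟩

section DotProduct

variable {ι : Type*} [Fintype ι]

theorem norm_sq_le_dotProduct_self (v : ι → ℝ) : ‖v‖ ^ 2 ≤ v ⬝ᵥ v := by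
  refine (Real.le_sqrt (norm_nonneg v) ?_).1 <| (pi_norm_le_iff_of_nonneg (sqrt_nonneg _)).2
    fun p => Real.abs_le_sqrt ?_
  · exact Finset.sum_nonneg fun q _ => mul_self_nonneg (v q)
  · rw [sq]
    exact Finset.single_le_sum (f := fun q => v q * v q) (fun q _ => mul_self_nonneg (v q))
      (Finset.mem_univ p)

theorem dotProduct_self_le_card_mul_norm_sq (v : ι → ℝ) :
    v ⬝ᵥ v ≤ Fintype.card ι * ‖v‖ ^ 2 := by
  calc v ⬝ᵥ v = ∑ p, ‖v p‖ ^ 2 := by simp only [dotProduct, Real.norm_eq_abs, sq, abs_mul_abs_self]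
    _ ≤ ∑ _p : ι, ‖v‖ ^ 2 := by gcongr with p; exact norm_le_pi_norm v p
    _ = Fintype.card ι * ‖v‖ ^ 2 := by simp

theorem hasDerivAt_dotProduct_self {e : ℝ → ι → ℝ} {e' : ι → ℝ} {t : ℝ}
    (he : ∀ p, HasDerivAt (fun s => e s p) (e' p) t) :
    HasDerivAt (fun s => e s ⬝ᵥ e s) (2 * (e t ⬝ᵥ e')) t := by
  refine (HasDerivAt.fun_sum (u := Finset.univ) fun p _ => (he p).mul (he p)).congr_deriv ?_
  simp only [dotProduct, Finset.mul_sum]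
  exact Finset.sum_congr rfl fun p _ => by ring

end DotProduct

namespace Matrix

section Stability

variable {ι : Type*} [Fintype ι] {M : Matrix ι ι ℝ}

theorem exists_pos_mul_dotProduct_self_le (hM : ∀ v ≠ 0, 0 < v ⬝ᵥ M *ᵥ v) :
    ∃ lam > 0, ∀ v, lam * (v ⬝ᵥ v) ≤ v ⬝ᵥ M *ᵥ v := by
  obtain ⟨lam, hlam, hle⟩ := exists_pos_mul_norm_sq_le
    (Q := fun w : EuclideanSpace ℝ ι => w.ofLp ⬝ᵥ M *ᵥ w.ofLp) (by fun_prop)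
    (fun c w => by simp [mulVec_smul]; ring) (fun w hw => hM _ (by simpa using hw))
  refine ⟨lam, hlam, fun v => ?_⟩
  have hv := hle (WithLp.toLp 2 v)
  rw [EuclideanSpace.norm_sq_eq] at hv
  simpa [dotProduct, sq] using hv

theorem exists_norm_le_exp_mul_of_dotProduct_mulVec_pos (hM : ∀ v ≠ 0, 0 < v ⬝ᵥ M *ᵥ v) :
    ∃ c > 0, ∃ lam > 0, ∀ e : ℝ → ι → ℝ,
      (∀ t p, HasDerivAt (fun s => e s p) (-(M *ᵥ e t) p) t) →
      ∀ t, 0 ≤ t → ‖e t‖ ≤ c * exp (-lam * t) * ‖e 0‖ := by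
  obtain ⟨lam, hlam, hcoer⟩ := exists_pos_mul_dotProduct_self_le hM
  refine ⟨√(Fintype.card ι + 1), by positivity, lam, hlam, fun e he t ht => ?_⟩
  have hdecay : e t ⬝ᵥ e t ≤ e 0 ⬝ᵥ e 0 * exp (-2 * lam * t) :=
    le_mul_exp_of_hasDerivAt_le (fun s => hasDerivAt_dotProduct_self (he s))
      (fun s => by
        change 2 * (e s ⬝ᵥ -(M *ᵥ e s)) ≤ _
        rw [dotProduct_neg]
        linarith [hcoer (e s)]) ht
  rw [← pow_le_pow_iff_left₀ (norm_nonneg _) (by positivity) two_ne_zero]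
  calc ‖e t‖ ^ 2 ≤ e 0 ⬝ᵥ e 0 * exp (-2 * lam * t) := (norm_sq_le_dotProduct_self _).trans hdecay
    _ ≤ (Fintype.card ι + 1) * ‖e 0‖ ^ 2 * exp (-2 * lam * t) := by
        gcongr
        linarith [dotProduct_self_le_card_mul_norm_sq (e 0), sq_nonneg ‖e 0‖]
    _ = (√(Fintype.card ι + 1) * exp (-lam * t) * ‖e 0‖) ^ 2 := by
        rw [mul_pow, mul_pow, sq_sqrt (by positivity), ← exp_nat_mul]
        push_cast
        ring_nf

end Stability

section Pinning

variable {m n R : Type*} [Fintype m] [Fintype n] [DecidableEq n]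

def diagPinning (n : Type*) [DecidableEq n] : Matrix (n × n) (n × n) ℝ :=
  diagonal fun p => if p.1 = p.2 then 1 else 0

theorem kronecker_one_mulVec_apply [NonAssocSemiring R] (L : Matrix m m R) (v : m × n → R)
    (i : m) (j : n) : ((L ⊗ₖ (1 : Matrix n n R)) *ᵥ v) (i, j) = (L *ᵥ fun k => v (k, j)) i := by
  simp [mulVec, dotProduct, Fintype.sum_prod_type, one_apply]

theorem kronecker_one_mulVec_eq_zero [NonAssocSemiring R] {L : Matrix m m R}
    (hL : L *ᵥ (fun _ => 1) = 0) (g : n → R) :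
    (L ⊗ₖ (1 : Matrix n n R)) *ᵥ (fun p => g p.2) = 0 := by
  ext ⟨i, j⟩
  rw [kronecker_one_mulVec_apply]
  have hLi := congrFun hL i
  simp only [mulVec, dotProduct, mul_one, Pi.zero_apply] at hLi ⊢
  rw [← Finset.sum_mul, hLi, zero_mul]

theorem dotProduct_kronecker_one_mulVec [CommSemiring R] (L : Matrix m m R) (v : m × n → R) :
    v ⬝ᵥ (L ⊗ₖ (1 : Matrix n n R)) *ᵥ v = ∑ j, (fun i => v (i, j)) ⬝ᵥ L *ᵥ fun i => v (i, j) := by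
  simp only [dotProduct, Fintype.sum_prod_type, kronecker_one_mulVec_apply]
  exact Finset.sum_comm

theorem dotProduct_diagPinning_mulVec (v : n × n → ℝ) :
    v ⬝ᵥ diagPinning n *ᵥ v = ∑ j, v (j, j) ^ 2 := by
  simp [diagPinning, dotProduct, mulVec_diagonal, Fintype.sum_prod_type, sq]

theorem dotProduct_kronecker_one_add_diagPinning_mulVec_pos {L : Matrix n n ℝ}
    (hL : L.PosSemidef) (hker : ∀ w, L *ᵥ w = 0 → ∃ c, w = fun _ => c) {v : n × n → ℝ}
    (hv : v ≠ 0) : 0 < v ⬝ᵥ (L ⊗ₖ 1 + diagPinning n) *ᵥ v := by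
  rw [add_mulVec, dotProduct_add, dotProduct_kronecker_one_mulVec, dotProduct_diagPinning_mulVec]
  have hcol : ∀ j, 0 ≤ (fun i => v (i, j)) ⬝ᵥ L *ᵥ fun i => v (i, j) := fun j => by
    simpa using hL.dotProduct_mulVec_nonneg fun i => v (i, j)
  have hdiag : ∀ j, 0 ≤ v (j, j) ^ 2 := fun j => sq_nonneg _
  refine (add_nonneg (Finset.sum_nonneg fun j _ => hcol j)
    (Finset.sum_nonneg fun j _ => hdiag j)).lt_of_ne fun h => hv ?_
  rw [eq_comm, add_eq_zero_iff_of_nonneg (Finset.sum_nonneg fun j _ => hcol j)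
    (Finset.sum_nonneg fun j _ => hdiag j), Finset.sum_eq_zero_iff_of_nonneg fun j _ => hcol j,
    Finset.sum_eq_zero_iff_of_nonneg fun j _ => hdiag j] at h
  ext ⟨i, j⟩
  obtain ⟨c, hc⟩ := hker _ <|
    (hL.dotProduct_mulVec_zero_iff _).1 (by simpa using h.1 j (Finset.mem_univ _))
  calc v (i, j) = c := congrFun hc i
    _ = v (j, j) := (congrFun hc j).symm
    _ = 0 := pow_eq_zero_iff two_ne_zero |>.1 (h.2 j (Finset.mem_univ _))

end Pinning

end Matrix

theorem consensus_filter_boundary_layer_general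
    (N : ℕ) (L : Matrix (Fin N) (Fin N) ℝ)
    (hpsd : L.PosSemidef)
    (hker : ∀ v : Fin N → ℝ, L.mulVec v = 0 ↔ ∃ c : ℝ, v = fun _ => c)
    (g : Fin N → ℝ) :
    let B : Matrix (Fin N × Fin N) (Fin N × Fin N) ℝ :=
      Matrix.diagonal fun p => if p.1 = p.2 then 1 else 0
    let M : Matrix (Fin N × Fin N) (Fin N × Fin N) ℝ :=
      Matrix.kroneckerMap (· * ·) L (1 : Matrix (Fin N) (Fin N) ℝ) + B
    ∃ xstar : Fin N × Fin N → ℝ,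
      (∀ i j : Fin N, xstar (i, j) = g j) ∧
      ((-M).mulVec xstar + B.mulVec (fun p => g p.2) = 0) ∧
      (∀ y : Fin N × Fin N → ℝ,
        (-M).mulVec y + B.mulVec (fun p => g p.2) = 0 → y = xstar) ∧
      ∃ c > (0 : ℝ), ∃ lam > (0 : ℝ),
        ∀ x : ℝ → Fin N × Fin N → ℝ,
          (∀ (t : ℝ) (p : Fin N × Fin N),
            HasDerivAt (fun s => x s p)
              (((-M).mulVec (x t) + B.mulVec (fun q => g q.2)) p) t) →
          ∀ t : ℝ, 0 ≤ t →
            ‖x t - xstar‖ ≤ c * Real.exp (-lam * t) * ‖x 0 - xstar‖ := by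
  intro B M
  have hM : ∀ v ≠ 0, 0 < v ⬝ᵥ M *ᵥ v := fun v hv =>
    dotProduct_kronecker_one_add_diagPinning_mulVec_pos hpsd (fun w => (hker w).1) hv
  set xstar : Fin N × Fin N → ℝ := fun p => g p.2
  have hfixed : M *ᵥ xstar = B *ᵥ xstar := by
    rw [add_mulVec, kronecker_one_mulVec_eq_zero ((hker _).2 ⟨1, rfl⟩), zero_add]
  have hres : ∀ y, (-M) *ᵥ y + B *ᵥ xstar = -(M *ᵥ (y - xstar)) := fun y => by
    rw [mulVec_sub, hfixed, neg_mulVec]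
    abel
  obtain ⟨c, hc, lam, hlam, hdecay⟩ := exists_norm_le_exp_mul_of_dotProduct_mulVec_pos hM
  refine ⟨xstar, fun _ _ => rfl, by rw [hres, sub_self, mulVec_zero, neg_zero], fun y hy => ?_,
    c, hc, lam, hlam, fun x hx t ht => hdecay (fun s => x s - xstar) (fun s p => ?_) t ht⟩
  · rw [hres, neg_eq_zero] at hy
    by_contra hne
    simpa [hy] using hM _ (sub_ne_zero.2 hne)
  · have hxp := (hx s p).sub_const (xstar p)
    rw [hres] at hxp
    exact hxp

theorem consensus_filter_boundary_layer
    (N : ℕ) (L : Matrix (Fin N) (Fin N) ℝ)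
    (hsymm : L.IsSymm) (hpsd : L.PosSemidef)
    (hker : ∀ v : Fin N → ℝ, L.mulVec v = 0 ↔ ∃ c : ℝ, v = fun _ => c)
    (g : Fin N → ℝ) :
    let B : Matrix (Fin N × Fin N) (Fin N × Fin N) ℝ :=
      Matrix.diagonal fun p => if p.1 = p.2 then 1 else 0
    let M : Matrix (Fin N × Fin N) (Fin N × Fin N) ℝ :=
      Matrix.kroneckerMap (· * ·) L (1 : Matrix (Fin N) (Fin N) ℝ) + B
    ∃ xstar : Fin N × Fin N → ℝ,
      (∀ i j : Fin N, xstar (i, j) = g j) ∧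
      ((-M).mulVec xstar + B.mulVec (fun p => g p.2) = 0) ∧
      (∀ y : Fin N × Fin N → ℝ,
        (-M).mulVec y + B.mulVec (fun p => g p.2) = 0 → y = xstar) ∧
      ∃ c > (0 : ℝ), ∃ lam > (0 : ℝ),
        ∀ x : ℝ → Fin N × Fin N → ℝ,
          (∀ (t : ℝ) (p : Fin N × Fin N),
            HasDerivAt (fun s => x s p)
              (((-M).mulVec (x t) + B.mulVec (fun q => g q.2)) p) t) →
          ∀ t : ℝ, 0 ≤ t →
            ‖x t - xstar‖ ≤ c * Real.exp (-lam * t) * ‖x 0 - xstar‖ :=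
  consensus_filter_boundary_layer_general N L hpsd hker g
end
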